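/- (Rectangle rule) Let μ = (μ_1 ≥ … ≥ μ_l) be a weakly decreasing sequence of nonnegative integers and let i ≥ 1, m ≥ 1, r ≥ 1 with i + 2m − 1 ≤ l, μ_i = μ_{i+1} = … = μ_{i+2m−1}, and (i = 1 or μ_{i−1} ≥ μ_i + 2r). Let μ' be obtained from μ by adding 2r to each of the 2m parts μ_i, …, μ_{i+2m−1}. Among s_i, s_{i+1}, …, s_{i+2m−1} (where s_k = l − k + μ_k) there are exactly m odd values, occupying m consecutive ranks j, j+1, …, j+m−1 in the increasing list of odd values of s, and exactly m even values, occupying m consecutive ranks j', …, j'+m−1 in the increasing list of even values of s. The symbols (α, β) of μ and (α', β') of μ' satisfy: α'_a = α_a + r for j ≤ a ≤ j+m−1 and α'_a = α_a otherwise; β'_b = β_b + r for j' ≤ b ≤ j'+m−1 and β'_b = β_b otherwise. -/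

import Mathlib

/-- `svals μ` lists the numbers `s_k = l - k + μ_k` (`1 ≤ k ≤ l`, `l` the
length of `μ`), computed with 0-based indices: entry `k` is `(l - 1 - k) + μ_k`.
For weakly decreasing `μ` this list is strictly decreasing. -/
def svals (μ : List ℕ) : List ℕ :=
  μ.mapIdx (fun k a => (μ.length - 1 - k) + a)

/-- The odd values `2f_1+1 < … < 2f_M+1` of `svals μ`, in increasing order. -/
def oddVals (μ : List ℕ) : List ℕ :=
  ((svals μ).filter (fun x => decide (x % 2 = 1))).reverse

/-- The even values `2g_1 < … < 2g_{M'}` of `svals μ`, in increasing order. -/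
def evenVals (μ : List ℕ) : List ℕ :=
  ((svals μ).filter (fun x => decide (x % 2 = 0))).reverse

/-- The top row of the symbol of `μ`: `α_i = f_i - i + 1` where
`2f_i + 1` is the `i`-th smallest odd value of `svals μ` (0-based entry `i`
is `α_{i+1} = f_{i+1} - i`). -/
def topRow (μ : List ℕ) : List ℕ :=
  (oddVals μ).mapIdx (fun i v => (v - 1) / 2 - i)

/-- The bottom row of the symbol of `μ`: `β_i = g_i - i + 1` where `2g_i` is
the `i`-th smallest even value of `svals μ`. -/
def botRow (μ : List ℕ) : List ℕ :=
  (evenVals μ).mapIdx (fun i v => v / 2 - i)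

/-! The equal parts `μ_i = … = μ_{i+2m-1}` give `2m` consecutive integers
`s_i > … > s_{i+2m-1}`, hence `m` odd and `m` even ones, and adding `2r` to these parts adds
`2r` to each of them without changing its parity. Filtering `s` by parity and reversing therefore
sends the block to `m` consecutive ranks of `oddVals` (resp. `evenVals`), namely those after the
values coming from `s_{i+2m}, …, s_l`, and adds `2r` to exactly these entries; halving turns this
into `+ r` on the symbol. The truncated subtraction in the symbol never bites, because the `a`-th
entry of an increasing list of numbers of one parity is at least `2a`. -/

def bumpBlock (i n c : ℕ) (L : List ℕ) : List ℕ :=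
  L.mapIdx fun k a => if i ≤ k ∧ k < i + n then a + c else a

lemma bumpBlock_append (c : ℕ) (A B C : List ℕ) :
    bumpBlock A.length B.length c (A ++ B ++ C) = A ++ B.map (· + c) ++ C := by
  simp only [bumpBlock, List.mapIdx_append, List.length_append]
  congr 2 <;> refine List.ext_getElem (by simp) fun k hk _ => ?_ <;> simp at hk ⊢ <;> omega

lemma take_append_take_drop_append_drop (i n : ℕ) (L : List ℕ) :
    L.take i ++ (L.drop i).take n ++ L.drop (i + n) = L := by
  rw [List.append_assoc, ← List.drop_drop, List.take_append_drop, List.take_append_drop]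

lemma bumpBlock_eq_append {i n : ℕ} (c : ℕ) {L : List ℕ} (h : i + n ≤ L.length) :
    bumpBlock i n c L = L.take i ++ ((L.drop i).take n).map (· + c) ++ L.drop (i + n) := by
  have hi : (L.take i).length = i := by simp; omega
  have hn : ((L.drop i).take n).length = n := by simp; omega
  have := bumpBlock_append c (L.take i) ((L.drop i).take n) (L.drop (i + n))
  rwa [hi, hn, take_append_take_drop_append_drop] at this

lemma reverse_filter_append_append (p : ℕ → Bool) (A B C : List ℕ) :
    ((A ++ B ++ C).filter p).reverse =
      (C.filter p).reverse ++ (B.filter p).reverse ++ (A.filter p).reverse := by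
  simp only [List.filter_append, List.reverse_append, List.append_assoc]

lemma take_drop_reverse_filter_append (p : ℕ → Bool) (A B C : List ℕ) :
    ((((A ++ B ++ C).filter p).reverse.drop (C.countP p)).take (B.countP p)) =
      (B.filter p).reverse := by
  rw [reverse_filter_append_append, List.append_assoc, List.countP_eq_length_filter,
    List.countP_eq_length_filter, List.drop_left' (List.length_reverse ..),
    List.take_left' (List.length_reverse ..)]

lemma reverse_filter_append_map_append {p : ℕ → Bool} {c : ℕ} (hp : ∀ x, p (x + c) = p x)
    (A B C : List ℕ) :
    ((A ++ B.map (· + c) ++ C).filter p).reverse =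
      bumpBlock (C.countP p) (B.countP p) c ((A ++ B ++ C).filter p).reverse := by
  have hB : (B.map (· + c)).filter p = (B.filter p).map (· + c) := by
    rw [List.filter_map]
    exact congrArg _ (List.filter_congr fun x _ => hp x)
  rw [reverse_filter_append_append, reverse_filter_append_append, List.countP_eq_length_filter,
    List.countP_eq_length_filter, ← List.length_reverse (as := C.filter p),
    ← List.length_reverse (as := B.filter p), bumpBlock_append, hB, List.map_reverse]

lemma reverse_filter_bumpBlock {p : ℕ → Bool} {c : ℕ} (hp : ∀ x, p (x + c) = p x) {i n : ℕ}
    {L : List ℕ} (h : i + n ≤ L.length) :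
    ((bumpBlock i n c L).filter p).reverse =
      bumpBlock ((L.drop (i + n)).countP p) (((L.drop i).take n).countP p) c
        (L.filter p).reverse := by
  rw [bumpBlock_eq_append c h, reverse_filter_append_map_append hp,
    take_append_take_drop_append_drop]

lemma take_drop_reverse_filter {p : ℕ → Bool} {i n k : ℕ} {L : List ℕ}
    (hk : ((L.drop i).take n).countP p = k) :
    ((L.filter p).reverse.drop ((L.drop (i + n)).countP p)).take k =
      (((L.drop i).take n).filter p).reverse := by
  subst hk
  have := take_drop_reverse_filter_append p (L.take i) ((L.drop i).take n) (L.drop (i + n))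
  rwa [take_append_take_drop_append_drop] at this

lemma mapIdx_bumpBlock {g : ℕ → ℕ → ℕ} {j n c c' : ℕ} {L : List ℕ}
    (hg : ∀ a (h : a < L.length), j ≤ a → a < j + n → g a (L[a] + c) = g a L[a] + c') :
    (bumpBlock j n c L).mapIdx g = bumpBlock j n c' (L.mapIdx g) := by
  refine List.ext_getElem (by simp [bumpBlock]) fun a h _ => ?_
  simp only [bumpBlock, List.getElem_mapIdx]
  split_ifs with ha
  · exact hg a (by simpa [bumpBlock] using h) ha.1 ha.2
  · rfl

lemma two_mul_add_le_getElem {L : List ℕ} {d : ℕ} (hL : L.Pairwise (· < ·))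
    (hd : ∀ x ∈ L, x % 2 = d) (a : ℕ) (ha : a < L.length) : 2 * a + d ≤ L[a] := by
  induction a with
  | zero => simpa [← hd L[0] (List.getElem_mem ha)] using Nat.mod_le _ _
  | succ a ih =>
    have hlt : L[a] < L[a + 1] := List.pairwise_iff_getElem.mp hL a (a + 1) _ ha (by omega)
    have := hd L[a] (List.getElem_mem _)
    have := hd L[a + 1] (List.getElem_mem ha)
    have := ih (by omega)
    omega

lemma countP_mod_two_range'_two_mul (a m : ℕ) {d : ℕ} (hd : d < 2) :
    (List.range' a (2 * m)).countP (fun x => x % 2 = d) = m := by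
  induction m with
  | zero => simp
  | succ m ih =>
    rw [Nat.mul_succ, ← List.range'_append, List.countP_append, ih]
    simp only [List.range', List.countP_cons, List.countP_nil, decide_eq_true_eq]
    split_ifs <;> omega

lemma length_svals (μ : List ℕ) : (svals μ).length = μ.length :=
  List.length_mapIdx

lemma svals_bumpBlock (i n c : ℕ) (μ : List ℕ) :
    svals (bumpBlock i n c μ) = bumpBlock i n c (svals μ) := by
  refine List.ext_getElem (by simp [svals, bumpBlock]) fun k _ _ => ?_
  simp only [svals, bumpBlock, List.getElem_mapIdx, List.length_mapIdx]
  split_ifs <;> omega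

lemma pairwise_gt_svals {μ : List ℕ} (hμ : μ.Pairwise (· ≥ ·)) : (svals μ).Pairwise (· > ·) := by
  refine List.pairwise_iff_getElem.mpr fun a b ha hb hab => ?_
  have := List.pairwise_iff_getElem.mp hμ a b (by simpa [svals] using ha)
    (by simpa [svals] using hb) hab
  simp only [svals, List.getElem_mapIdx, List.length_mapIdx] at ha hb ⊢
  omega

lemma take_drop_svals_of_const {μ : List ℕ} {i n c : ℕ} (h : i + n ≤ μ.length)
    (hconst : ∀ k, i ≤ k → k < i + n → μ.getD k 0 = c) :
    ((svals μ).drop i).take n = (List.range' (μ.length - i - n + c) n).reverse := by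
  refine List.ext_getElem (by simp [svals]; omega) fun q hq _ => ?_
  have hq : q < n := by simp at hq; omega
  have := hconst (i + q) (by omega) (by omega)
  rw [List.getD_eq_getElem _ _ (by omega)] at this
  simp [svals, this]
  omega

lemma pairwise_lt_reverse_filter_svals {μ : List ℕ} (hμ : μ.Pairwise (· ≥ ·)) (p : ℕ → Bool) :
    ((svals μ).filter p).reverse.Pairwise (· < ·) :=
  List.pairwise_reverse.mpr ((pairwise_gt_svals hμ).filter p)

lemma mod_two_of_mem_reverse_filter {L : List ℕ} {d x : ℕ}
    (hx : x ∈ (L.filter fun y => decide (y % 2 = d)).reverse) : x % 2 = d := by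
  simpa using List.of_mem_filter (List.mem_reverse.mp hx)

lemma decide_add_two_mul_mod_two (d r x : ℕ) :
    decide ((x + 2 * r) % 2 = d) = decide (x % 2 = d) := by
  rw [Nat.add_mul_mod_self_left]

lemma topRow_bumpBlock {μ : List ℕ} (hμ : μ.Pairwise (· ≥ ·)) {i n : ℕ} (r : ℕ)
    (h : i + n ≤ μ.length) {k : ℕ}
    (hk : (((svals μ).drop i).take n).countP (fun x => x % 2 = 1) = k) :
    topRow (bumpBlock i n (2 * r) μ) =
      bumpBlock (((svals μ).drop (i + n)).countP fun x => x % 2 = 1) k r (topRow μ) := by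
  subst hk
  rw [topRow, topRow, oddVals, oddVals, svals_bumpBlock,
    reverse_filter_bumpBlock (decide_add_two_mul_mod_two 1 r) (by rwa [length_svals])]
  refine mapIdx_bumpBlock fun a ha _ _ => ?_
  have := two_mul_add_le_getElem (pairwise_lt_reverse_filter_svals hμ _)
    (fun _ => mod_two_of_mem_reverse_filter) a ha
  omega

lemma botRow_bumpBlock {μ : List ℕ} (hμ : μ.Pairwise (· ≥ ·)) {i n : ℕ} (r : ℕ)
    (h : i + n ≤ μ.length) {k : ℕ}
    (hk : (((svals μ).drop i).take n).countP (fun x => x % 2 = 0) = k) :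
    botRow (bumpBlock i n (2 * r) μ) =
      bumpBlock (((svals μ).drop (i + n)).countP fun x => x % 2 = 0) k r (botRow μ) := by
  subst hk
  rw [botRow, botRow, evenVals, evenVals, svals_bumpBlock,
    reverse_filter_bumpBlock (decide_add_two_mul_mod_two 0 r) (by rwa [length_svals])]
  refine mapIdx_bumpBlock fun a ha _ _ => ?_
  have := two_mul_add_le_getElem (pairwise_lt_reverse_filter_svals hμ _)
    (fun _ => mod_two_of_mem_reverse_filter) a ha
  omega

theorem rectangleRule_general (μ : List ℕ) (hsort : μ.Pairwise (· ≥ ·)) (i m r : ℕ)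
    (hle : i + 2 * m ≤ μ.length)
    (heq : ∀ k, i ≤ k → k < i + 2 * m → μ.getD k 0 = μ.getD i 0) :
    ∀ μ' : List ℕ,
      μ' = μ.mapIdx (fun k a => if i ≤ k ∧ k < i + 2 * m then a + 2 * r else a) →
    ∀ window : List ℕ, window = ((svals μ).drop i).take (2 * m) →
    (window.countP (fun x => decide (x % 2 = 1))) = m ∧
    (window.countP (fun x => decide (x % 2 = 0))) = m ∧
    ∃ j j' : ℕ,
      ((oddVals μ).drop j).take m
          = (window.filter (fun x => decide (x % 2 = 1))).reverse ∧
      ((evenVals μ).drop j').take m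
          = (window.filter (fun x => decide (x % 2 = 0))).reverse ∧
      topRow μ' = (topRow μ).mapIdx
        (fun a v => if j ≤ a ∧ a < j + m then v + r else v) ∧
      botRow μ' = (botRow μ).mapIdx
        (fun b v => if j' ≤ b ∧ b < j' + m then v + r else v) := by
  rintro _ rfl window rfl
  have hwindow := take_drop_svals_of_const hle heq
  have hcount : ∀ d < 2, (((svals μ).drop i).take (2 * m)).countP (fun x => x % 2 = d) = m :=
    fun d hd => by rw [hwindow, List.countP_reverse, countP_mod_two_range'_two_mul _ _ hd]
  have hodd := hcount 1 one_lt_two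
  have heven := hcount 0 two_pos
  exact ⟨hodd, heven, _, _, take_drop_reverse_filter hodd, take_drop_reverse_filter heven,
    topRow_bumpBlock hsort r hle hodd, botRow_bumpBlock hsort r hle heven⟩

/-- **Rectangle rule.** Let `μ` be weakly decreasing with `2m` equal
consecutive parts `μ_i = … = μ_{i+2m-1}` (0-based indices, `i + 2m ≤ l`),
with `i` the first index or `μ_{i-1} ≥ μ_i + 2r`, and let `μ'` add `2r` to
each of these `2m` parts.  Among `s_i, …, s_{i+2m-1}` there are exactly `m`
odd values, occupying `m` consecutive ranks `j, …, j+m-1` (0-based) in the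
increasing list of odd values of `s`, and exactly `m` even values, occupying
`m` consecutive ranks `j', …, j'+m-1` in the increasing list of even values;
and the symbol of `μ'` is the symbol of `μ` with those `m` top-row entries
and those `m` bottom-row entries each increased by `r`. -/
theorem rectangleRule (μ : List ℕ) (hsort : μ.Pairwise (· ≥ ·)) (i m r : ℕ)
    (hm : 1 ≤ m) (hr : 1 ≤ r) (hle : i + 2 * m ≤ μ.length)
    (heq : ∀ k, i ≤ k → k < i + 2 * m → μ.getD k 0 = μ.getD i 0)
    (hsep : i = 0 ∨ μ.getD (i - 1) 0 ≥ μ.getD i 0 + 2 * r) :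
    ∀ μ' : List ℕ,
      μ' = μ.mapIdx (fun k a => if i ≤ k ∧ k < i + 2 * m then a + 2 * r else a) →
    ∀ window : List ℕ, window = ((svals μ).drop i).take (2 * m) →
    (window.countP (fun x => decide (x % 2 = 1))) = m ∧
    (window.countP (fun x => decide (x % 2 = 0))) = m ∧
    ∃ j j' : ℕ,
      ((oddVals μ).drop j).take m
          = (window.filter (fun x => decide (x % 2 = 1))).reverse ∧
      ((evenVals μ).drop j').take m
          = (window.filter (fun x => decide (x % 2 = 0))).reverse ∧
      topRow μ' = (topRow μ).mapIdx
        (fun a v => if j ≤ a ∧ a < j + m then v + r else v) ∧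
      botRow μ' = (botRow μ).mapIdx
        (fun b v => if j' ≤ b ∧ b < j' + m then v + r else v) :=
  rectangleRule_general μ hsort i m r hle heq
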